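/- arXiv:1810.07116 — 4 statements merged into one kernel-verified Lean document; each statement's English description precedes it below -/
import Mathlib

section
/- Let I and I₁ be patterns with I ⊆ I₁ ⊆ ℐ, I nonempty and Supp(∧I₁) > 0. If bond(I) = bond(I₁), then Supp(∧I) = Supp(∧I₁), Supp(∨I) = Supp(∨I₁), and consequently Supp(¬I) = Supp(¬I₁). -/
open Finset

variable {τ ι : Type*} [DecidableEq ι]

/-- Conjunctive support: number of transactions containing the whole pattern. -/
def suppConj (T : Finset τ) (items : τ → Finset ι) (X : Finset ι) : ℕ :=
  (T.filter fun t => X ⊆ items t).card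

/-- Disjunctive support: number of transactions containing at least one item of the pattern. -/
def suppDisj (T : Finset τ) (items : τ → Finset ι) (X : Finset ι) : ℕ :=
  (T.filter fun t => (X ∩ items t).Nonempty).card

/-- Negative support: number of transactions containing no item of the pattern. -/
def suppNeg (T : Finset τ) (items : τ → Finset ι) (X : Finset ι) : ℕ :=
  (T.filter fun t => X ∩ items t = ∅).card

/-- The bond measure (division by zero in `ℚ` yields `0`, matching the convention). -/
def bond (T : Finset τ) (items : τ → Finset ι) (X : Finset ι) : ℚ :=
  (suppConj T items X : ℚ) / (suppDisj T items X : ℚ)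

/-!
Write `a, b` and `a₁, b₁` for the conjunctive and disjunctive supports of `X` and `X₁`.
Enlarging the pattern lowers the conjunctive support and raises the disjunctive one, so
`bond X₁ = a₁ / b₁ ≤ a₁ / b ≤ a / b = bond X`, and equality of the bonds forces both
inequalities to be equalities. The negative support is the complement of the disjunctive one.
-/

section Supports

variable (T : Finset τ) (items : τ → Finset ι)

theorem suppConj_anti {X Y : Finset ι} (h : X ⊆ Y) : suppConj T items Y ≤ suppConj T items X :=
  card_le_card <| monotone_filter_right T fun _ _ hY => h.trans hY

theorem suppDisj_mono {X Y : Finset ι} (h : X ⊆ Y) : suppDisj T items X ≤ suppDisj T items Y :=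
  card_le_card <| monotone_filter_right T fun _ _ hX => hX.mono (inter_subset_inter_right h)

theorem suppConj_le_suppDisj {X : Finset ι} (hX : X.Nonempty) :
    suppConj T items X ≤ suppDisj T items X :=
  card_le_card <| monotone_filter_right T fun _ _ hsub =>
    hX.mono (subset_inter_iff.2 ⟨le_rfl, hsub⟩)

theorem suppDisj_add_suppNeg (X : Finset ι) :
    suppDisj T items X + suppNeg T items X = T.card := by
  simp only [suppDisj, suppNeg, ← not_nonempty_iff_eq_empty]
  exact card_filter_add_card_filter_not _

end Supports

theorem eq_and_eq_of_div_eq_div_of_le {K : Type*} [Field K] [LinearOrder K]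
    [IsStrictOrderedRing K] {a a₁ b b₁ : K} (ha₁ : 0 < a₁) (ha : a₁ ≤ a) (hb : 0 < b)
    (hb₁ : b ≤ b₁) (h : a / b = a₁ / b₁) : a = a₁ ∧ b = b₁ := by
  obtain rfl : b = b₁ := by
    refine hb₁.eq_of_not_lt fun hlt => lt_irrefl (a / b) ?_
    calc a / b = a₁ / b₁ := h
      _ < a₁ / b := div_lt_div_of_pos_left ha₁ hb hlt
      _ ≤ a / b := div_le_div_of_nonneg_right ha hb.le
  exact ⟨(div_left_inj' hb.ne').1 h, rfl⟩

theorem stmt0_general (T : Finset τ) (items : τ → Finset ι)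
    (X X₁ : Finset ι) (hsub : X ⊆ X₁) (hne : X.Nonempty)
    (hpos : 0 < suppConj T items X₁)
    (hbond : bond T items X = bond T items X₁) :
    suppConj T items X = suppConj T items X₁ ∧
      suppDisj T items X = suppDisj T items X₁ ∧
        suppNeg T items X = suppNeg T items X₁ := by
  have hconj := suppConj_anti T items hsub
  have hdisj := suppDisj_mono T items hsub
  have hdisj_pos : 0 < suppDisj T items X :=
    hpos.trans_le (hconj.trans (suppConj_le_suppDisj T items hne))
  obtain ⟨hc, hd⟩ := eq_and_eq_of_div_eq_div_of_le (K := ℚ) (by exact_mod_cast hpos)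
    (by exact_mod_cast hconj) (by exact_mod_cast hdisj_pos) (by exact_mod_cast hdisj) hbond
  replace hd : suppDisj T items X = suppDisj T items X₁ := Nat.cast_injective hd
  refine ⟨Nat.cast_injective hc, hd, ?_⟩
  have := suppDisj_add_suppNeg T items X
  have := suppDisj_add_suppNeg T items X₁
  omega

theorem stmt0 (T : Finset τ) (items : τ → Finset ι) (I : Finset ι)
    (hitems : ∀ t ∈ T, items t ⊆ I)
    (X X₁ : Finset ι) (hsub : X ⊆ X₁) (hsubI : X₁ ⊆ I) (hne : X.Nonempty)
    (hpos : 0 < suppConj T items X₁)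
    (hbond : bond T items X = bond T items X₁) :
    suppConj T items X = suppConj T items X₁ ∧
      suppDisj T items X = suppDisj T items X₁ ∧
        suppNeg T items X = suppNeg T items X₁ :=
  stmt0_general T items X X₁ hsub hne hpos hbond
end

section
/- Let I and I₁ be nonempty patterns of ℐ with Supp(∧I) > 0 and Supp(∧I₁) > 0 that belong to the same equivalence class of f_bond, i.e. f_bond(I) = f_bond(I₁). Then bond(I) = bond(I₁), Supp(∧I) = Supp(∧I₁), Supp(∨I) = Supp(∨I₁), and Supp(¬I) = Supp(¬I₁). -/
/-!
Adding an item can only shrink the conjunctive support and enlarge the disjunctive one. Hence,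
when `Supp(∧X) > 0`, adding an item without changing the bond forces both supports, and so the
underlying sets of transactions, to stay the same. Every item of `f_bond(X)` is therefore
contained in every transaction containing `X`, and meets only transactions that meet `X`: the
pattern `f_bond(X)` has the same conjunctive and disjunctive transaction sets as `X`. Two
patterns with the same closure thus share their supports, their bond, and their negative
support `|𝒯| - Supp(∨X)`.
-/

open Finset

variable {τ ι : Type*} [DecidableEq ι]

/-- The closure operator associated with the bond measure:
`f_bond(X) = X ∪ {i ∈ ℐ \ X : bond (X ∪ {i}) = bond X}`. -/
def fbond (T : Finset τ) (items : τ → Finset ι) (I : Finset ι) (X : Finset ι) : Finset ι :=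
  X ∪ (I \ X).filter fun i => bond T items (insert i X) = bond T items X

theorem eq_and_eq_of_div_eq_div_of_le_s1 {c c' d d' : ℕ} (hc : 0 < c) (hd : 0 < d)
    (hc' : c' ≤ c) (hd' : d ≤ d') (h : (c' : ℚ) / d' = c / d) : c' = c ∧ d' = d := by
  have hcross : c' * d = c * d' := by
    have hd'pos : (d' : ℚ) ≠ 0 := by exact_mod_cast (hd.trans_le hd').ne'
    exact_mod_cast (div_eq_div_iff hd'pos (by positivity)).mp h
  have hle₁ : c' * d ≤ c * d := Nat.mul_le_mul_right d hc'
  have hle₂ : c * d ≤ c * d' := Nat.mul_le_mul_left c hd'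
  exact ⟨Nat.eq_of_mul_eq_mul_right hd (by linarith),
    (Nat.eq_of_mul_eq_mul_left hc (by linarith)).symm⟩

section Tids

variable (T : Finset τ) (items : τ → Finset ι)

def conjTids (X : Finset ι) : Finset τ :=
  T.filter fun t => X ⊆ items t

def disjTids (X : Finset ι) : Finset τ :=
  T.filter fun t => (X ∩ items t).Nonempty

theorem card_conjTids (X : Finset ι) : (conjTids T items X).card = suppConj T items X := rfl

theorem card_disjTids (X : Finset ι) : (disjTids T items X).card = suppDisj T items X := rfl

variable {T items}

theorem mem_conjTids {X : Finset ι} {t : τ} : t ∈ conjTids T items X ↔ t ∈ T ∧ X ⊆ items t :=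
  mem_filter

theorem mem_disjTids {X : Finset ι} {t : τ} :
    t ∈ disjTids T items X ↔ t ∈ T ∧ (X ∩ items t).Nonempty :=
  mem_filter

theorem conjTids_antitone : Antitone (conjTids T items) := fun _ _ hXY =>
  monotone_filter_right T fun _ _ hY => hXY.trans hY

theorem disjTids_monotone : Monotone (disjTids T items) := fun _ _ hXY =>
  monotone_filter_right T fun _ _ hX => hX.mono (inter_subset_inter_right hXY)

theorem conjTids_subset_disjTids {X : Finset ι} (hX : X.Nonempty) :
    conjTids T items X ⊆ disjTids T items X := fun _ ht =>
  have ⟨hT, hXt⟩ := mem_conjTids.mp ht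
  mem_disjTids.mpr ⟨hT, by rwa [inter_eq_left.mpr hXt]⟩

theorem suppDisj_pos {X : Finset ι} (hX : X.Nonempty) (hpos : 0 < suppConj T items X) :
    0 < suppDisj T items X :=
  hpos.trans_le (card_le_card (conjTids_subset_disjTids hX))

theorem tids_insert_eq_of_bond_insert_eq {X : Finset ι} {i : ι} (hX : X.Nonempty)
    (hpos : 0 < suppConj T items X) (hbond : bond T items (insert i X) = bond T items X) :
    conjTids T items (insert i X) = conjTids T items X ∧
      disjTids T items (insert i X) = disjTids T items X := by
  have hconj := conjTids_antitone (T := T) (items := items) (subset_insert i X)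
  have hdisj := disjTids_monotone (T := T) (items := items) (subset_insert i X)
  obtain ⟨hc, hd⟩ := eq_and_eq_of_div_eq_div_of_le_s1 hpos (suppDisj_pos hX hpos)
    (card_le_card hconj) (card_le_card hdisj) hbond
  exact ⟨eq_of_subset_of_card_le hconj hc.ge, (eq_of_subset_of_card_le hdisj hd.le).symm⟩

theorem tids_insert_eq_of_mem_fbond {I X : Finset ι} {j : ι} (hX : X.Nonempty)
    (hpos : 0 < suppConj T items X) (hj : j ∈ fbond T items I X) :
    conjTids T items (insert j X) = conjTids T items X ∧
      disjTids T items (insert j X) = disjTids T items X := by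
  rcases mem_union.mp hj with hjX | hj
  · simp only [insert_eq_of_mem hjX, and_self]
  · exact tids_insert_eq_of_bond_insert_eq hX hpos (mem_filter.mp hj).2

theorem conjTids_fbond {I X : Finset ι} (hX : X.Nonempty) (hpos : 0 < suppConj T items X) :
    conjTids T items (fbond T items I X) = conjTids T items X := by
  refine (conjTids_antitone subset_union_left).antisymm fun t ht => ?_
  refine mem_conjTids.mpr ⟨(mem_conjTids.mp ht).1, fun j hj => ?_⟩
  rw [← (tids_insert_eq_of_mem_fbond hX hpos hj).1, mem_conjTids] at ht
  exact ht.2 (mem_insert_self j X)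

theorem disjTids_fbond {I X : Finset ι} (hX : X.Nonempty) (hpos : 0 < suppConj T items X) :
    disjTids T items (fbond T items I X) = disjTids T items X := by
  refine subset_antisymm (fun t ht => ?_) (disjTids_monotone subset_union_left)
  obtain ⟨hT, j, hj⟩ := mem_disjTids.mp ht
  obtain ⟨hjcl, hjt⟩ := mem_inter.mp hj
  rw [← (tids_insert_eq_of_mem_fbond hX hpos hjcl).2]
  exact mem_disjTids.mpr ⟨hT, j, mem_inter.mpr ⟨mem_insert_self j X, hjt⟩⟩

end Tids

theorem suppNeg_add_suppDisj (T : Finset τ) (items : τ → Finset ι) (X : Finset ι) :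
    suppNeg T items X + suppDisj T items X = T.card := by
  simp only [suppNeg, suppDisj, nonempty_iff_ne_empty]
  exact card_filter_add_card_filter_not _

theorem stmt1_general (T : Finset τ) (items : τ → Finset ι) (I : Finset ι)
    (X X₁ : Finset ι)
    (hXne : X.Nonempty) (hX₁ne : X₁.Nonempty)
    (hXpos : 0 < suppConj T items X) (hX₁pos : 0 < suppConj T items X₁)
    (hcl : fbond T items I X = fbond T items I X₁) :
    bond T items X = bond T items X₁ ∧
      suppConj T items X = suppConj T items X₁ ∧
        suppDisj T items X = suppDisj T items X₁ ∧
          suppNeg T items X = suppNeg T items X₁ := by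
  have hconj : suppConj T items X = suppConj T items X₁ := by
    rw [← card_conjTids, ← card_conjTids, ← conjTids_fbond (I := I) hXne hXpos,
      ← conjTids_fbond (I := I) hX₁ne hX₁pos, hcl]
  have hdisj : suppDisj T items X = suppDisj T items X₁ := by
    rw [← card_disjTids, ← card_disjTids, ← disjTids_fbond (I := I) hXne hXpos,
      ← disjTids_fbond (I := I) hX₁ne hX₁pos, hcl]
  have hneg : suppNeg T items X = suppNeg T items X₁ := by
    have h := suppNeg_add_suppDisj T items X
    have h₁ := suppNeg_add_suppDisj T items X₁
    omega
  exact ⟨by rw [bond, bond, hconj, hdisj], hconj, hdisj, hneg⟩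

theorem stmt1 (T : Finset τ) (items : τ → Finset ι) (I : Finset ι)
    (hitems : ∀ t ∈ T, items t ⊆ I)
    (X X₁ : Finset ι) (hXI : X ⊆ I) (hX₁I : X₁ ⊆ I)
    (hXne : X.Nonempty) (hX₁ne : X₁.Nonempty)
    (hXpos : 0 < suppConj T items X) (hX₁pos : 0 < suppConj T items X₁)
    (hcl : fbond T items I X = fbond T items I X₁) :
    bond T items X = bond T items X₁ ∧
      suppConj T items X = suppConj T items X₁ ∧
        suppDisj T items X = suppDisj T items X₁ ∧
          suppNeg T items X = suppNeg T items X₁ :=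
  stmt1_general T items I X X₁ hXne hX₁ne hXpos hX₁pos hcl
end

section
/- Let I ∈ MCR be a correlated rare pattern. Then every nonempty subset I₁ ⊆ I is correlated (bond(I₁) ≥ minbond), and every superset I₁ with I ⊆ I₁ ⊆ ℐ is rare (Supp(∧I₁) < minsupp). -/
open Finset

variable {τ ι : Type*} [DecidableEq ι]

/-- Correlated rare patterns: correlated (bond at least `minbond`) and rare
(conjunctive support below `minsupp`) subsets of the item set. -/
def MCR (T : Finset τ) (items : τ → Finset ι) (I : Finset ι) (minsupp : ℕ) (minbond : ℚ) :
    Set (Finset ι) :=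
  {X | X ⊆ I ∧ minbond ≤ bond T items X ∧ suppConj T items X < minsupp}

section Support

variable (T : Finset τ) (items : τ → Finset ι)

theorem bond_nonneg (X : Finset ι) : 0 ≤ bond T items X := by
  unfold bond
  positivity

theorem bond_anti {X Y : Finset ι} (hY : Y.Nonempty) (h : Y ⊆ X) :
    bond T items X ≤ bond T items Y := by
  have hconj := suppConj_anti T items h
  rcases (suppDisj T items Y).eq_zero_or_pos with hzero | hpos
  · -- every transaction containing `X` meets `Y`, so `X` has no support either
    have hX : suppConj T items X = 0 :=
      Nat.eq_zero_of_le_zero (hzero ▸ hconj.trans (suppConj_le_suppDisj T items hY))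
    simpa [bond, hX] using bond_nonneg T items Y
  · unfold bond
    exact div_le_div₀ (Nat.cast_nonneg _) (by exact_mod_cast hconj) (by exact_mod_cast hpos)
      (by exact_mod_cast suppDisj_mono T items h)

end Support

theorem stmt3_general (T : Finset τ) (items : τ → Finset ι) (I : Finset ι)
    (minsupp : ℕ) (minbond : ℚ)
    (X : Finset ι) (hX : X ∈ MCR T items I minsupp minbond) :
    (∀ X₁ : Finset ι, X₁.Nonempty → X₁ ⊆ X → minbond ≤ bond T items X₁) ∧
      (∀ X₁ : Finset ι, X ⊆ X₁ → X₁ ⊆ I → suppConj T items X₁ < minsupp) := by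
  obtain ⟨-, hcorrelated, hrare⟩ := hX
  exact ⟨fun X₁ hne hsub => hcorrelated.trans (bond_anti T items hne hsub),
    fun X₁ hsub _ => (suppConj_anti T items hsub).trans_lt hrare⟩

theorem stmt3 (T : Finset τ) (items : τ → Finset ι) (I : Finset ι)
    (hitems : ∀ t ∈ T, items t ⊆ I)
    (minsupp : ℕ) (minbond : ℚ)
    (hs : 1 ≤ minsupp) (hb0 : 0 < minbond) (hb1 : minbond ≤ 1)
    (X : Finset ι) (hX : X ∈ MCR T items I minsupp minbond) :
    (∀ X₁ : Finset ι, X₁.Nonempty → X₁ ⊆ X → minbond ≤ bond T items X₁) ∧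
      (∀ X₁ : Finset ι, X ⊆ X₁ → X₁ ⊆ I → suppConj T items X₁ < minsupp) :=
  stmt3_general T items I minsupp minbond X hX
end

section
/- Let X ∈ MCR and put F := f_bond(X). Then X ⊆ F, F ∈ MFCR (in particular F is itself a correlated rare pattern with no strict superset of the same bond value), bond(F) = bond(X), and Supp(∧F) = Supp(∧X). Moreover F is the least element of the set of closed supersets of X: F ⊆ G for every G ∈ MFCR with X ⊆ G. -/
open Finset

variable {τ ι : Type*} [DecidableEq ι]

/-- Closed correlated rare patterns: no strict superset (within the item set)
has the same bond value. -/
def MFCR (T : Finset τ) (items : τ → Finset ι) (I : Finset ι) (minsupp : ℕ) (minbond : ℚ) :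
    Set (Finset ι) :=
  {X | X ∈ MCR T items I minsupp minbond ∧
    ∀ Y : Finset ι, X ⊂ Y → Y ⊆ I → bond T items Y ≠ bond T items X}

/-!
For `X ⊆ Y` the conjunctive support can only drop and the disjunctive support can only grow, so
when `bond X > 0` the equation `bond Y = bond X` forces both sets of supporting transactions to
stay the same. Item by item, this says every `i ∈ Y` is bonded to `X`: each transaction containing
`X` contains `i`, and each transaction containing `i` meets `X`. Hence `f_bond(X)` consists exactly
of the items bonded to `X`, it has the supports and bond of `X`, and every pattern above `X` with
the same bond lies inside it. Being bonded to `X` passes to any `G ⊇ X`, so an item of `f_bond(X)`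
outside a closed `G ⊇ X` could be adjoined to `G` without changing its bond.
-/

theorem eq_and_eq_of_div_eq_div_of_le_of_le {K : Type*} [Field K] [LinearOrder K]
    [IsStrictOrderedRing K] {a b a' b' : K} (ha : 0 < a) (hb : 0 < b) (ha' : a' ≤ a)
    (hb' : b ≤ b') (h : a' / b' = a / b) : a' = a ∧ b' = b := by
  have hcross : a' * b = a * b' := (div_eq_div_iff (hb.trans_le hb').ne' hb.ne').1 h
  have ha'a : a' = a := by nlinarith
  subst ha'a
  exact ⟨rfl, by nlinarith⟩

section Bond

variable (T : Finset τ) (items : τ → Finset ι)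

def conjExtent (X : Finset ι) : Finset τ := T.filter fun t => X ⊆ items t

def disjExtent (X : Finset ι) : Finset τ := T.filter fun t => (X ∩ items t).Nonempty

def IsBonded (X : Finset ι) (i : ι) : Prop :=
  ∀ t ∈ T, (X ⊆ items t → i ∈ items t) ∧ (i ∈ items t → (X ∩ items t).Nonempty)

variable {T items}

theorem suppConj_eq_card_conjExtent (X : Finset ι) :
    suppConj T items X = (conjExtent T items X).card := rfl

theorem suppDisj_eq_card_disjExtent (X : Finset ι) :
    suppDisj T items X = (disjExtent T items X).card := rfl

theorem conjExtent_anti {X Y : Finset ι} (hXY : X ⊆ Y) :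
    conjExtent T items Y ⊆ conjExtent T items X :=
  monotone_filter_right T fun _ _ hY => hXY.trans hY

theorem disjExtent_mono {X Y : Finset ι} (hXY : X ⊆ Y) :
    disjExtent T items X ⊆ disjExtent T items Y :=
  monotone_filter_right T fun _ _ hX => hX.mono (inter_subset_inter_right hXY)

theorem suppConj_pos_of_bond_pos {X : Finset ι} (h : 0 < bond T items X) :
    0 < suppConj T items X :=
  Nat.pos_of_ne_zero fun h0 => by simp [bond, h0] at h

theorem suppDisj_pos_of_bond_pos {X : Finset ι} (h : 0 < bond T items X) :
    0 < suppDisj T items X :=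
  Nat.pos_of_ne_zero fun h0 => by simp [bond, h0] at h

theorem bond_eq_iff_extents_eq {X Y : Finset ι} (hXY : X ⊆ Y) (hpos : 0 < bond T items X) :
    bond T items Y = bond T items X ↔
      conjExtent T items Y = conjExtent T items X ∧
        disjExtent T items Y = disjExtent T items X := by
  refine ⟨fun hb => ?_, fun ⟨hc, hd⟩ => ?_⟩
  · have hconj := conjExtent_anti (T := T) (items := items) hXY
    have hdisj := disjExtent_mono (T := T) (items := items) hXY
    obtain ⟨hc, hd⟩ := eq_and_eq_of_div_eq_div_of_le_of_le
      (by exact_mod_cast suppConj_pos_of_bond_pos hpos)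
      (by exact_mod_cast suppDisj_pos_of_bond_pos hpos)
      (by exact_mod_cast card_le_card hconj) (by exact_mod_cast card_le_card hdisj) hb
    exact ⟨eq_of_subset_of_card_le hconj (by exact_mod_cast hc.ge),
      (eq_of_subset_of_card_le hdisj (by exact_mod_cast hd.le)).symm⟩
  · simp only [bond, suppConj_eq_card_conjExtent, suppDisj_eq_card_disjExtent, hc, hd]

theorem isBonded_of_mem {X : Finset ι} {i : ι} (hi : i ∈ X) : IsBonded T items X i :=
  fun _ _ => ⟨fun hX => hX hi, fun hit => ⟨i, mem_inter.2 ⟨hi, hit⟩⟩⟩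

theorem IsBonded.mono {X Y : Finset ι} {i : ι} (h : IsBonded T items X i) (hXY : X ⊆ Y) :
    IsBonded T items Y i :=
  fun t ht => ⟨fun hY => (h t ht).1 (hXY.trans hY),
    fun hit => ((h t ht).2 hit).mono (inter_subset_inter_right hXY)⟩

theorem extents_eq_iff_forall_isBonded {X Y : Finset ι} (hXY : X ⊆ Y) :
    conjExtent T items Y = conjExtent T items X ∧ disjExtent T items Y = disjExtent T items X ↔
      ∀ i ∈ Y, IsBonded T items X i := by
  constructor
  · rintro ⟨hc, hd⟩ i hi t ht
    refine ⟨fun hX => ?_, fun hit => ?_⟩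
    · have htY : t ∈ conjExtent T items Y := hc ▸ mem_filter.2 ⟨ht, hX⟩
      exact (mem_filter.1 htY).2 hi
    · have htX : t ∈ disjExtent T items X :=
        hd ▸ mem_filter.2 ⟨ht, i, mem_inter.2 ⟨hi, hit⟩⟩
      exact (mem_filter.1 htX).2
  · intro hY
    refine ⟨filter_congr fun t ht => ⟨hXY.trans, fun hX i hi => (hY i hi t ht).1 hX⟩,
      filter_congr fun t ht =>
        ⟨fun ⟨i, hi⟩ => ?_, fun hX => hX.mono (inter_subset_inter_right hXY)⟩⟩
    obtain ⟨hiY, hit⟩ := mem_inter.1 hi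
    exact (hY i hiY t ht).2 hit

theorem bond_eq_iff_forall_isBonded {X Y : Finset ι} (hXY : X ⊆ Y) (hpos : 0 < bond T items X) :
    bond T items Y = bond T items X ↔ ∀ i ∈ Y, IsBonded T items X i :=
  (bond_eq_iff_extents_eq hXY hpos).trans (extents_eq_iff_forall_isBonded hXY)

theorem mem_fbond_iff {I X : Finset ι} (hXI : X ⊆ I) (hpos : 0 < bond T items X) {i : ι} :
    i ∈ fbond T items I X ↔ i ∈ I ∧ IsBonded T items X i := by
  have hinsert : bond T items (insert i X) = bond T items X ↔ IsBonded T items X i := by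
    rw [bond_eq_iff_forall_isBonded (subset_insert i X) hpos, forall_mem_insert]
    exact and_iff_left fun _ => isBonded_of_mem
  simp only [fbond, mem_union, mem_filter, mem_sdiff, hinsert]
  constructor
  · rintro (hiX | ⟨⟨hiI, -⟩, hi⟩)
    exacts [⟨hXI hiX, isBonded_of_mem hiX⟩, ⟨hiI, hi⟩]
  · rintro ⟨hiI, hi⟩
    by_cases hiX : i ∈ X
    exacts [Or.inl hiX, Or.inr ⟨⟨hiI, hiX⟩, hi⟩]

end Bond

theorem stmt9_general (T : Finset τ) (items : τ → Finset ι) (I : Finset ι)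
    (minsupp : ℕ) (minbond : ℚ)
    (hb0 : 0 < minbond)
    (X : Finset ι) (hX : X ∈ MCR T items I minsupp minbond) :
    let F := fbond T items I X
    X ⊆ F ∧ F ∈ MFCR T items I minsupp minbond ∧
      bond T items F = bond T items X ∧
        suppConj T items F = suppConj T items X ∧
          ∀ G ∈ MFCR T items I minsupp minbond, X ⊆ G → F ⊆ G := by
  intro F
  obtain ⟨hXI, hXb, hXr⟩ := hX
  have hpos : 0 < bond T items X := hb0.trans_le hXb
  have hXF : X ⊆ F := subset_union_left
  have hFI : F ⊆ I := fun i hi => ((mem_fbond_iff hXI hpos).1 hi).1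
  have hbF : bond T items F = bond T items X :=
    (bond_eq_iff_forall_isBonded hXF hpos).2 fun i hi => ((mem_fbond_iff hXI hpos).1 hi).2
  have hcF : suppConj T items F = suppConj T items X :=
    congrArg card ((bond_eq_iff_extents_eq hXF hpos).1 hbF).1
  refine ⟨hXF, ⟨⟨hFI, hbF ▸ hXb, hcF ▸ hXr⟩, fun Y hFY hYI hbY => ?_⟩, hbF, hcF, ?_⟩
  · have hYbonded := (bond_eq_iff_forall_isBonded (hXF.trans hFY.subset) hpos).1 (hbY.trans hbF)
    exact hFY.not_subset fun i hi => (mem_fbond_iff hXI hpos).2 ⟨hYI hi, hYbonded i hi⟩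
  · rintro G ⟨⟨hGI, hGb, -⟩, hGclosed⟩ hXG i hiF
    by_contra hiG
    obtain ⟨hiI, hi⟩ := (mem_fbond_iff hXI hpos).1 hiF
    refine hGclosed (insert i G) (ssubset_insert hiG) (insert_subset hiI hGI) ?_
    refine (bond_eq_iff_forall_isBonded (subset_insert i G) (hb0.trans_le hGb)).2 ?_
    exact (forall_mem_insert _ _ _).2 ⟨hi.mono hXG, fun _ => isBonded_of_mem⟩

theorem stmt9 (T : Finset τ) (items : τ → Finset ι) (I : Finset ι)
    (hitems : ∀ t ∈ T, items t ⊆ I)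
    (minsupp : ℕ) (minbond : ℚ)
    (hs : 1 ≤ minsupp) (hb0 : 0 < minbond) (hb1 : minbond ≤ 1)
    (X : Finset ι) (hX : X ∈ MCR T items I minsupp minbond) :
    let F := fbond T items I X
    X ⊆ F ∧ F ∈ MFCR T items I minsupp minbond ∧
      bond T items F = bond T items X ∧
        suppConj T items F = suppConj T items X ∧
          ∀ G ∈ MFCR T items I minsupp minbond, X ⊆ G → F ⊆ G :=
  stmt9_general T items I minsupp minbond hb0 X hX
end
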